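/- arXiv:1205.3416 — 4 statements merged into one kernel-verified Lean document; each statement's English description precedes it below -/
import Mathlib

section
/- For any G-module V and any integer k ≥ 1, β_k(G,V) ≤ β_k(F[V], F[V]^G) + 1. -/
/-!
Let `S = F[V]^G` and let `f ∈ S` be homogeneous of degree `e + 1`, where `F[V]_e ⊆ S_+^k F[V]`.
Splitting off a variable from each monomial writes `f` as a sum of linear forms times
polynomials of degree `e`, so `f ∈ S_+^k · F[V]_+`. The Reynolds operator `R` is `S`-linear,
fixes `f` and maps `F[V]_+` into `S_+`; hence `f = R f ∈ S_+^k · S_+ = S_+^{k+1}`.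
-/

open scoped ENNReal


open MvPolynomial

/-- The (right) action of a group element `g` on the coordinate ring `F[V]` of `V = ι → F`,
determined by `(f^g)(v) = f (g • v)` where `g` acts on `V` through the representation `ρ`. -/
noncomputable def polyAct {F : Type*} [Field F] {G : Type*} [Group G] {ι : Type*}
    [Fintype ι] [DecidableEq ι] (ρ : Representation F G (ι → F)) (g : G) :
    MvPolynomial ι F →ₐ[F] MvPolynomial ι F :=
  MvPolynomial.aeval (fun i => ∑ j, (ρ g (Pi.single j 1) i) • MvPolynomial.X j)

/-- The ring of polynomial invariants `F[V]^G`. -/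
noncomputable def invRing {F : Type*} [Field F] {G : Type*} [Group G] {ι : Type*}
    [Fintype ι] [DecidableEq ι] (ρ : Representation F G (ι → F)) :
    Subalgebra F (MvPolynomial ι F) :=
  ⨅ g : G, AlgHom.equalizer (polyAct ρ g) (AlgHom.id F (MvPolynomial ι F))

/-- The degree `d` homogeneous component of a graded subalgebra `S` of the polynomial ring,
as a subspace of the polynomial ring. -/
noncomputable def subComp {F : Type*} [Field F] {ι : Type*} (S : Subalgebra F (MvPolynomial ι F)) (d : ℕ) :
    Submodule F (MvPolynomial ι F) :=
  Subalgebra.toSubmodule S ⊓ homogeneousSubmodule ι F d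

/-- `S_+`, the span of the homogeneous elements of positive degree of `S`. -/
noncomputable def subPos {F : Type*} [Field F] {ι : Type*} (S : Subalgebra F (MvPolynomial ι F)) :
    Submodule F (MvPolynomial ι F) :=
  ⨆ d ∈ Set.Ioi (0 : ℕ), subComp S d

/-- `β_k(S)`, the top degree of `S_+ / S_+^{k+1}`, i.e. the supremum (in `ℕ∞`) of the degrees `d`
such that the degree `d` component of `S_+` is not contained in `S_+^{k+1}`. -/
noncomputable def betaAlg {F : Type*} [Field F] {ι : Type*}
    (S : Subalgebra F (MvPolynomial ι F)) (k : ℕ) : ℕ∞ :=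
  sSup ((fun d : ℕ => (d : ℕ∞)) '' {d | 0 < d ∧ ¬ subComp S d ≤ subPos S ^ (k + 1)})

/-- `β_k(F[V], S)`, the top degree of `F[V]/S_+^k F[V]`, i.e. the supremum (in `ℕ∞`) of the
degrees `d` such that the degree `d` component of the polynomial ring is not contained in
`S_+^k ⬝ F[V]`. -/
noncomputable def betaMod {F : Type*} [Field F] {ι : Type*}
    (S : Subalgebra F (MvPolynomial ι F)) (k : ℕ) : ℕ∞ :=
  sSup ((fun d : ℕ => (d : ℕ∞)) ''
    {d | ¬ homogeneousSubmodule ι F d ≤ subPos S ^ k * (⊤ : Submodule F (MvPolynomial ι F))})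

/-- `β_k(G)`, the supremum over all finite dimensional `G`-modules `V` of `β_k(F[V]^G)`. -/
noncomputable def betaGrp (F : Type*) [Field F] (G : Type*) [Group G] (k : ℕ) : ℕ∞ :=
  ⨆ (n : ℕ) (ρ : Representation F G (Fin n → F)), betaAlg (invRing ρ) k

/-- `S` is a finitely generated module over its subalgebra `T`. -/
noncomputable def fgOver {F : Type*} [Field F] {ι : Type*} (S T : Subalgebra F (MvPolynomial ι F)) : Prop :=
  ∃ B : Finset (MvPolynomial ι F), (B : Set (MvPolynomial ι F)) ⊆ S ∧
    Subalgebra.toSubmodule S ≤ Subalgebra.toSubmodule T * Submodule.span F (B : Set (MvPolynomial ι F))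

/-- `σ(S)`: the minimal `d` such that `S` is a finitely generated module over the subalgebra
`F[S_{≤ d}]` generated by the homogeneous elements of `S` of degree at most `d`. -/
noncomputable def sigmaAlg {F : Type*} [Field F] {ι : Type*}
    (S : Subalgebra F (MvPolynomial ι F)) : ℕ :=
  sInf {d : ℕ | fgOver S (Algebra.adjoin F (⋃ i ∈ Set.Iic d, (subComp S i : Set (MvPolynomial ι F))))}

/-- `σ(G)`, the supremum over all finite dimensional `G`-modules `V` of `σ(F[V]^G)`. -/
noncomputable def sigmaGrp (F : Type*) [Field F] (G : Type*) [Group G] : ℕ∞ :=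
  ⨆ (n : ℕ) (ρ : Representation F G (Fin n → F)), (sigmaAlg (invRing ρ) : ℕ∞)

/-- An irreducible (simple, nonzero) representation. -/
def IsIrredRep {F : Type*} [Field F] {G : Type*} [Group G] {V : Type*}
    [AddCommGroup V] [Module F V] (π : Representation F G V) : Prop :=
  Nontrivial V ∧ ∀ W : Submodule F V, (∀ g : G, ∀ x ∈ W, π g x ∈ W) → W = ⊥ ∨ W = ⊤

lemma homogeneousSubmodule_succ_le_mul {σ R : Type*} [CommSemiring R] (e : ℕ) :
    homogeneousSubmodule σ R (e + 1) ≤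
      homogeneousSubmodule σ R 1 * homogeneousSubmodule σ R e := by
  intro p hp
  rw [p.as_sum]
  refine Submodule.sum_mem _ fun s hs => ?_
  have hs_deg : s.degree = e + 1 := by
    rw [Finsupp.degree_eq_weight_one]
    exact hp (mem_support_iff.mp hs)
  obtain ⟨i, hi⟩ : ∃ i, s i ≠ 0 := by
    by_contra! h
    simp [show s = 0 from Finsupp.ext h] at hs_deg
  obtain ⟨t, rfl⟩ : ∃ t, s = Finsupp.single i 1 + t :=
    ⟨s - Finsupp.single i 1,
      (add_tsub_cancel_of_le (Finsupp.single_le_iff.mpr (by omega))).symm⟩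
  rw [monomial_single_add, pow_one]
  refine Submodule.mul_mem_mul (isHomogeneous_X R i) (isHomogeneous_monomial _ ?_)
  rw [map_add, Finsupp.degree_single] at hs_deg
  omega

section Graded

variable {F : Type*} [Field F] {ι : Type*} (S : Subalgebra F (MvPolynomial ι F))

lemma subComp_le_subPos {d : ℕ} (hd : 0 < d) : subComp S d ≤ subPos S :=
  le_iSup₂ (f := fun d (_ : d ∈ Set.Ioi 0) => subComp S d) d hd

lemma subPos_le_toSubmodule : subPos S ≤ Subalgebra.toSubmodule S :=
  iSup₂_le fun _ _ => inf_le_left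

lemma subPos_pow_le_toSubmodule : ∀ k : ℕ, subPos S ^ k ≤ Subalgebra.toSubmodule S
  | 0 => by
    rw [pow_zero, Submodule.one_le]
    exact S.one_mem
  | k + 1 => by
    rw [pow_succ]
    exact (mul_le_mul' (subPos_pow_le_toSubmodule k) (subPos_le_toSubmodule S)).trans
      (Subalgebra.isIdempotentElem_toSubmodule S).le

variable {S} in
lemma mem_subPos_of_constantCoeff_eq_zero
    (hS : ∀ f ∈ S, ∀ d, homogeneousComponent d f ∈ S) {f : MvPolynomial ι F} (hf : f ∈ S)
    (h0 : constantCoeff f = 0) : f ∈ subPos S := by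
  rw [← sum_homogeneousComponent f]
  refine Submodule.sum_mem _ fun d _ => ?_
  rcases d with _ | d
  · simp [homogeneousComponent_zero, ← constantCoeff_eq, h0]
  · exact subComp_le_subPos S d.succ_pos ⟨hS f hf _, homogeneousComponent_mem _ f⟩

end Graded

section Invariants

variable {F : Type*} [Field F] {G : Type*} [Group G] {ι : Type*} [Fintype ι] [DecidableEq ι]
  (ρ : Representation F G (ι → F))

lemma polyAct_X (g : G) (i : ι) :
    polyAct ρ g (X i) = ∑ j, LinearMap.toMatrix' (ρ g) i j • X j :=
  aeval_X _ i

lemma polyAct_polyAct (g g' : G) (f : MvPolynomial ι F) :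
    polyAct ρ g (polyAct ρ g' f) = polyAct ρ (g' * g) f := by
  suffices (polyAct ρ g).comp (polyAct ρ g') = polyAct ρ (g' * g) from
    DFunLike.congr_fun this f
  refine algHom_ext fun i => ?_
  simp only [AlgHom.comp_apply, polyAct_X, map_sum, map_smul, Finset.smul_sum, smul_smul,
    map_mul, LinearMap.toMatrix'_mul, Matrix.mul_apply, Finset.sum_smul]
  exact Finset.sum_comm

lemma polyAct_mem_homogeneousSubmodule (g : G) {d : ℕ} {f : MvPolynomial ι F}
    (hf : f ∈ homogeneousSubmodule ι F d) : polyAct ρ g f ∈ homogeneousSubmodule ι F d := by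
  have hlin (i : ι) :
      (∑ j, LinearMap.toMatrix' (ρ g) i j • X j : MvPolynomial ι F).IsHomogeneous 1 :=
    (mem_homogeneousSubmodule _ _).mp <| Submodule.sum_mem _ fun j _ =>
      Submodule.smul_mem _ _ ((mem_homogeneousSubmodule _ _).mpr (isHomogeneous_X F j))
  rw [mem_homogeneousSubmodule] at hf ⊢
  exact one_mul d ▸ hf.aeval _ hlin

lemma homogeneousComponent_polyAct (g : G) (d : ℕ) (f : MvPolynomial ι F) :
    homogeneousComponent d (polyAct ρ g f) = polyAct ρ g (homogeneousComponent d f) := by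
  conv_lhs => rw [← sum_homogeneousComponent f]
  simp only [map_sum, homogeneousComponent_of_mem
    (polyAct_mem_homogeneousSubmodule ρ g (homogeneousComponent_mem _ f)), Finset.sum_ite_eq,
    Finset.mem_range]
  split_ifs with hd
  · rfl
  · rw [homogeneousComponent_eq_zero _ _ (by omega), map_zero]

lemma constantCoeff_polyAct (g : G) (f : MvPolynomial ι F) :
    constantCoeff (polyAct ρ g f) = constantCoeff f := by
  suffices constantCoeff.comp (polyAct ρ g : MvPolynomial ι F →+* MvPolynomial ι F) =
      constantCoeff from DFunLike.congr_fun this f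
  ext <;> simp [polyAct_X]

lemma mem_invRing_iff {f : MvPolynomial ι F} : f ∈ invRing ρ ↔ ∀ g, polyAct ρ g f = f := by
  simp [invRing, Algebra.mem_iInf, AlgHom.mem_equalizer]

lemma homogeneousComponent_mem_invRing {f : MvPolynomial ι F} (hf : f ∈ invRing ρ) (d : ℕ) :
    homogeneousComponent d f ∈ invRing ρ := by
  rw [mem_invRing_iff] at hf ⊢
  intro g
  rw [← homogeneousComponent_polyAct, hf g]

variable [Fintype G]

noncomputable def reynolds : MvPolynomial ι F →ₗ[F] MvPolynomial ι F :=
  (Nat.card G : F)⁻¹ • ∑ g : G, (polyAct ρ g).toLinearMap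

lemma reynolds_apply (f : MvPolynomial ι F) :
    reynolds ρ f = (Nat.card G : F)⁻¹ • ∑ g : G, polyAct ρ g f := by
  simp [reynolds, LinearMap.sum_apply]

lemma reynolds_eq_self (hG : (Nat.card G : F) ≠ 0) {f : MvPolynomial ι F}
    (hf : f ∈ invRing ρ) : reynolds ρ f = f := by
  rw [reynolds_apply, Finset.sum_congr rfl fun g _ => (mem_invRing_iff ρ).mp hf g,
    Finset.sum_const, Finset.card_univ, ← Nat.card_eq_fintype_card, ← Nat.cast_smul_eq_nsmul F,
    smul_smul, inv_mul_cancel₀ hG, one_smul]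

lemma reynolds_mem_invRing (f : MvPolynomial ι F) : reynolds ρ f ∈ invRing ρ := by
  rw [mem_invRing_iff]
  intro h
  have hperm : ∑ g : G, polyAct ρ h (polyAct ρ g f) = ∑ g : G, polyAct ρ g f := by
    simp only [polyAct_polyAct]
    exact Fintype.sum_equiv (Equiv.mulRight h) _ _ fun g => rfl
  rw [reynolds_apply, map_smul, map_sum, hperm]

lemma reynolds_mul_of_mem_left {a : MvPolynomial ι F} (ha : a ∈ invRing ρ)
    (f : MvPolynomial ι F) : reynolds ρ (a * f) = a * reynolds ρ f := by
  simp only [reynolds_apply, map_mul, (mem_invRing_iff ρ).mp ha, ← Finset.mul_sum, mul_smul_comm]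

lemma constantCoeff_reynolds (hG : (Nat.card G : F) ≠ 0) (f : MvPolynomial ι F) :
    constantCoeff (reynolds ρ f) = constantCoeff f := by
  rw [Nat.card_eq_fintype_card] at hG
  simp [reynolds_apply, smul_eq_C_mul, constantCoeff_polyAct, hG]

lemma reynolds_mem_subPos (hG : (Nat.card G : F) ≠ 0) {f : MvPolynomial ι F}
    (hf : constantCoeff f = 0) : reynolds ρ f ∈ subPos (invRing ρ) :=
  mem_subPos_of_constantCoeff_eq_zero (fun _ => homogeneousComponent_mem_invRing ρ)
    (reynolds_mem_invRing ρ f) ((constantCoeff_reynolds ρ hG f).trans hf)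

lemma reynolds_mem_subPos_of_mem_mul_top (hG : (Nat.card G : F) ≠ 0) {f : MvPolynomial ι F}
    (hf : f ∈ homogeneousSubmodule ι F 1 * ⊤) : reynolds ρ f ∈ subPos (invRing ρ) := by
  refine Submodule.mul_induction_on hf (fun x hx y _ => reynolds_mem_subPos ρ hG ?_)
    fun _ _ hx hy => ?_
  · rw [map_mul, constantCoeff_eq, ((mem_homogeneousSubmodule 1 x).mp hx).coeff_eq_zero (by simp),
      zero_mul]
  · rw [map_add]
    exact add_mem hx hy

lemma subComp_invRing_succ_le_subPos_pow_succ (hG : (Nat.card G : F) ≠ 0) {k e : ℕ}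
    (he : homogeneousSubmodule ι F e ≤ subPos (invRing ρ) ^ k * ⊤) :
    subComp (invRing ρ) (e + 1) ≤ subPos (invRing ρ) ^ (k + 1) := by
  rintro f ⟨hf_inv, hf_deg⟩
  have hsplit : homogeneousSubmodule ι F (e + 1) ≤
      subPos (invRing ρ) ^ k * (homogeneousSubmodule ι F 1 * ⊤) :=
    calc homogeneousSubmodule ι F (e + 1)
        ≤ homogeneousSubmodule ι F 1 * homogeneousSubmodule ι F e :=
          homogeneousSubmodule_succ_le_mul e
      _ ≤ homogeneousSubmodule ι F 1 * (subPos (invRing ρ) ^ k * ⊤) := mul_le_mul_right he _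
      _ = subPos (invRing ρ) ^ k * (homogeneousSubmodule ι F 1 * ⊤) := mul_left_comm _ _ _
  rw [← reynolds_eq_self ρ hG hf_inv]
  refine Submodule.mul_induction_on (hsplit hf_deg) (fun a ha m hm => ?_) fun _ _ hx hy => ?_
  · rw [reynolds_mul_of_mem_left ρ (subPos_pow_le_toSubmodule _ k ha), pow_succ]
    exact Submodule.mul_mem_mul ha (reynolds_mem_subPos_of_mem_mul_top ρ hG hm)
  · rw [map_add]
    exact add_mem hx hy

end Invariants

theorem betaAlg_le_betaMod_add_one_general {F : Type*} [Field F] {G : Type*} [Group G] [Finite G]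
    (hG : (Nat.card G : F) ≠ 0) (n : ℕ) (ρ : Representation F G (Fin n → F))
    (k : ℕ) :
    betaAlg (invRing ρ) k ≤ betaMod (invRing ρ) k + 1 := by
  have := Fintype.ofFinite G
  refine sSup_le ?_
  rintro _ ⟨d, ⟨hd, hd_not_le⟩, rfl⟩
  obtain ⟨e, rfl⟩ := Nat.exists_eq_succ_of_ne_zero hd.ne'
  have he : ¬ homogeneousSubmodule (Fin n) F e ≤ subPos (invRing ρ) ^ k * ⊤ :=
    fun he => hd_not_le (subComp_invRing_succ_le_subPos_pow_succ ρ hG he)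
  have he_le : (e : ℕ∞) ≤ betaMod (invRing ρ) k := le_sSup ⟨e, he, rfl⟩
  push_cast
  exact add_le_add_left he_le 1

/-- For any `G`-module `V` and any `k ≥ 1`, `β_k(G,V) ≤ β_k(F[V], F[V]^G) + 1`. -/
theorem betaAlg_le_betaMod_add_one {F : Type*} [Field F] {G : Type*} [Group G] [Finite G]
    (hG : (Nat.card G : F) ≠ 0) (n : ℕ) (ρ : Representation F G (Fin n → F))
    (k : ℕ) (hk : 1 ≤ k) :
    betaAlg (invRing ρ) k ≤ betaMod (invRing ρ) k + 1 :=
  betaAlg_le_betaMod_add_one_general hG n ρ k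
end

section
/- Let R be a commutative graded F-algebra with R_0 = F. For any positive integers r ≤ k, β_k(R) ≤ (k/r)·β_r(R); equivalently, r·β_k(R) ≤ k·β_r(R). -/
open scoped ENNReal


/-- `R_+`, the span of the homogeneous elements of positive degree. -/
noncomputable def gradePos {F R : Type*} [Field F] [CommRing R] [Algebra F R]
    (𝒜 : ℕ → Submodule F R) : Submodule F R :=
  ⨆ d ∈ Set.Ioi (0 : ℕ), 𝒜 d

/-- `β_k(R)`, the top degree of `R_+/R_+^{k+1}`:  the supremum (in `ℕ∞`) of the degrees `d`
such that the degree `d` component of `R_+` is not contained in `R_+^{k+1}`. -/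
noncomputable def gBeta {F R : Type*} [Field F] [CommRing R] [Algebra F R]
    (𝒜 : ℕ → Submodule F R) (k : ℕ) : ℕ∞ :=
  sSup ((fun d : ℕ => (d : ℕ∞)) '' {d | 0 < d ∧ ¬ 𝒜 d ≤ gradePos 𝒜 ^ (k + 1)})

/-- `F[R_{≤ d}]`, the subalgebra of `R` generated by the homogeneous elements
of degree at most `d`. -/
noncomputable def gBelow {F R : Type*} [Field F] [CommRing R] [Algebra F R]
    (𝒜 : ℕ → Submodule F R) (d : ℕ) : Subalgebra F R :=
  Algebra.adjoin F (⋃ i ∈ Set.Iic d, (𝒜 i : Set R))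

/-- `σ(R)`, the minimal `d` such that `R` is a finitely generated module over `F[R_{≤ d}]`. -/
noncomputable def gSigma {F R : Type*} [Field F] [CommRing R] [Algebra F R]
    (𝒜 : ℕ → Submodule F R) : ℕ :=
  sInf {d : ℕ | Module.Finite (gBelow 𝒜 d) R}

/-- `η(R) = β(R_+, F[R_{≤ σ(R)}])`, the top degree of `R_+` modulo `(F[R_{≤ σ(R)}])_+ ⬝ R_+`. -/
noncomputable def gEta {F R : Type*} [Field F] [CommRing R] [Algebra F R]
    (𝒜 : ℕ → Submodule F R) : ℕ∞ :=
  sSup ((fun d : ℕ => (d : ℕ∞)) '' {d | 0 < d ∧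
    ¬ 𝒜 d ≤ (Subalgebra.toSubmodule (gBelow 𝒜 (gSigma 𝒜)) ⊓ gradePos 𝒜) * gradePos 𝒜})

/-
Suppose every homogeneous element of degree `> b` lies in `R_+^{r+1}`. By induction on `k ≥ r`, a
homogeneous `x` of degree `d` with `k b < r d` lies in `R_+^{k+1}`. Indeed, if `(k+1) b < r d`, then
`x ∈ R_+^{k+1}`, so `x` is a combination of products of `k + 1` homogeneous factors of positive
degree and total degree `d`. Removing a factor of least degree leaves a product of degree
`d' ≥ k d / (k + 1)`, so `k b < r d'`; that product lies in `R_+^{k+1}` by induction, whence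
`x ∈ R_+^{k+2}`. Taking `b = β_r(R)` gives `β_k(R) ≤ ⌊k β_r(R) / r⌋`.
-/

section

variable {F R : Type*} [Field F] [CommRing R] [Algebra F R] (𝒜 : ℕ → Submodule F R)

theorem gradePos_eq_span :
    gradePos 𝒜 = Submodule.span F (⋃ d ∈ Set.Ioi (0 : ℕ), (𝒜 d : Set R)) := by
  simp [gradePos, Submodule.span_iUnion₂]

theorem grade_le_gradePos {d : ℕ} (hd : 0 < d) : 𝒜 d ≤ gradePos 𝒜 :=
  le_iSup₂ (f := fun d (_ : d ∈ Set.Ioi 0) => 𝒜 d) d hd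

theorem gBeta_le_iff {k n : ℕ} :
    gBeta 𝒜 k ≤ n ↔ ∀ d, n < d → 𝒜 d ≤ gradePos 𝒜 ^ (k + 1) := by
  simp only [gBeta, sSup_le_iff, Set.forall_mem_image, Set.mem_ofPred_eq, Nat.cast_le]
  refine ⟨fun h d hnd => ?_, fun h d ⟨_, hd⟩ => ?_⟩
  · by_contra hd
    exact absurd (h ⟨by omega, hd⟩) (by omega)
  · by_contra hnd
    exact hd (h d (by omega))

variable [GradedAlgebra 𝒜]

theorem grade_inf_span_le_span_proj (d : ℕ) (S : Set R) :
    𝒜 d ⊓ Submodule.span F S ≤ Submodule.span F (GradedAlgebra.proj 𝒜 d '' S) := by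
  rintro x ⟨hxd, hxS⟩
  rw [← Submodule.map_span, ← DirectSum.decompose_of_mem_same 𝒜 hxd]
  exact Submodule.mem_map_of_mem hxS

theorem grade_inf_gradePos_pow_le {n d : ℕ} {P : Submodule F R}
    (h : ∀ (e : Fin n → ℕ) (f : Fin n → R), (∀ i, 0 < e i) → (∀ i, f i ∈ 𝒜 (e i)) →
      ∑ i, e i = d → ∏ i, f i ∈ P) :
    𝒜 d ⊓ gradePos 𝒜 ^ n ≤ P := by
  rw [gradePos_eq_span, Submodule.span_pow]
  refine (grade_inf_span_le_span_proj 𝒜 d _).trans (Submodule.span_le.2 ?_)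
  rintro _ ⟨t, ht, rfl⟩
  obtain ⟨f, rfl⟩ := Set.mem_pow.1 ht
  have hf (i : Fin n) : ∃ e, 0 < e ∧ (f i : R) ∈ 𝒜 e := by
    simpa only [Set.mem_iUnion, Set.mem_Ioi, SetLike.mem_coe, exists_prop] using (f i).2
  choose e he hfe using hf
  have hprod : (List.ofFn fun i => (f i : R)).prod ∈ 𝒜 (∑ i, e i) := by
    rw [List.prod_ofFn]
    exact SetLike.prod_mem_graded 𝒜 e _ fun i _ => hfe i
  by_cases hsum : ∑ i, e i = d
  · rw [SetLike.mem_coe, GradedAlgebra.proj_apply, ← hsum,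
      DirectSum.decompose_of_mem_same 𝒜 hprod, List.prod_ofFn]
    exact h e _ he hfe hsum
  · rw [SetLike.mem_coe, GradedAlgebra.proj_apply, DirectSum.decompose_of_mem_ne 𝒜 hprod hsum]
    exact zero_mem P

theorem grade_le_gradePos_pow_succ_succ {r b n : ℕ} (hn : 0 < n)
    (ih : ∀ d, n * b < r * d → 𝒜 d ≤ gradePos 𝒜 ^ (n + 1))
    {d : ℕ} (hd : (n + 1) * b < r * d) : 𝒜 d ≤ gradePos 𝒜 ^ (n + 2) := by
  intro x hx
  have hx' : x ∈ gradePos 𝒜 ^ (n + 1) :=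
    ih d (lt_of_le_of_lt (Nat.mul_le_mul_right b n.le_succ) hd) hx
  refine grade_inf_gradePos_pow_le 𝒜 (fun e f he hf hsum => ?_) ⟨hx, hx'⟩
  obtain ⟨i, -, hi⟩ := Finset.exists_le_of_sum_le (f := fun i => (n + 1) * e i)
    (g := fun _ => d) Finset.univ_nonempty (by simp [← Finset.mul_sum, hsum])
  have hsplit : e i + ∑ j ∈ Finset.univ.erase i, e j = d := by
    rw [Finset.add_sum_erase _ _ (Finset.mem_univ i), hsum]
  have hrest : n * b < r * ∑ j ∈ Finset.univ.erase i, e j := by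
    generalize ∑ j ∈ Finset.univ.erase i, e j = s at hsplit ⊢
    subst hsplit
    by_contra! h
    nlinarith [Nat.mul_le_mul_left r hi, Nat.mul_le_mul_left (n + 1) h]
  rw [← Finset.mul_prod_erase _ f (Finset.mem_univ i), pow_succ']
  exact Submodule.mul_mem_mul (grade_le_gradePos 𝒜 (he i) (hf i))
    (ih _ hrest (SetLike.prod_mem_graded 𝒜 e f fun j _ => hf j))

theorem grade_le_gradePos_pow_of_mul_lt {r b k : ℕ} (hr : 0 < r)
    (hb : ∀ d, b < d → 𝒜 d ≤ gradePos 𝒜 ^ (r + 1)) (hrk : r ≤ k)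
    {d : ℕ} (hd : k * b < r * d) : 𝒜 d ≤ gradePos 𝒜 ^ (k + 1) := by
  induction k, hrk using Nat.le_induction generalizing d with
  | base => exact hb d (Nat.lt_of_mul_lt_mul_left hd)
  | succ n hn ih => exact grade_le_gradePos_pow_succ_succ 𝒜 (by omega) (fun _ => ih) hd

end

theorem gBeta_mul_le_general {F R : Type*} [Field F] [CommRing R] [Algebra F R]
    (𝒜 : ℕ → Submodule F R) [GradedAlgebra 𝒜]
    (r k : ℕ) (hr : 1 ≤ r) (hrk : r ≤ k) :
    (r : ℕ∞) * gBeta 𝒜 k ≤ (k : ℕ∞) * gBeta 𝒜 r := by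
  rcases eq_or_ne (gBeta 𝒜 r) ⊤ with htop | hfin
  · rw [htop, ENat.mul_top (by exact_mod_cast (by omega : k ≠ 0))]
    exact le_top
  obtain ⟨b, hb⟩ := ENat.ne_top_iff_exists.1 hfin
  have hk : gBeta 𝒜 k ≤ (k * b / r : ℕ) := (gBeta_le_iff 𝒜).2 fun d hd =>
    grade_le_gradePos_pow_of_mul_lt 𝒜 hr ((gBeta_le_iff 𝒜).1 hb.ge) hrk
      (by rw [mul_comm r]; exact (Nat.div_lt_iff_lt_mul hr).1 hd)
  calc (r : ℕ∞) * gBeta 𝒜 k ≤ r * (k * b / r : ℕ) := by gcongr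
    _ ≤ k * b := by exact_mod_cast Nat.mul_div_le (k * b) r
    _ = k * gBeta 𝒜 r := by rw [← hb]

/-- For positive integers `r ≤ k`, `β_k(R) ≤ (k/r)·β_r(R)`, i.e. `r·β_k(R) ≤ k·β_r(R)`. -/
theorem gBeta_mul_le {F R : Type*} [Field F] [CommRing R] [Algebra F R]
    (𝒜 : ℕ → Submodule F R) [GradedAlgebra 𝒜] (h0 : 𝒜 0 = 1)
    (r k : ℕ) (hr : 1 ≤ r) (hrk : r ≤ k) :
    (r : ℕ∞) * gBeta 𝒜 k ≤ (k : ℕ∞) * gBeta 𝒜 r :=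
  gBeta_mul_le_general 𝒜 r k hr hrk
end

section
/- Let R be a finitely generated commutative graded F-algebra with R_0 = F. Then for every positive integer k, β_k(R) ≥ k·σ(R). -/
open scoped ENNReal


/-!
Let `s = σ(R) > 0` and let `I` be the ideal of `R` generated by the homogeneous elements of degree
in `(0, s)`, i.e. by the positive part of `T = F[R_{<s}]`. By graded Nakayama, `R` would be a finite
`T`-module if `I` contained every `R_d` of large degree; by minimality of `σ` it does not. On the
other hand a homogeneous element of `R_+^k` of degree `< k s` is a sum of products of `k`
positive-degree homogeneous factors, one of which has degree `< s`, so it lies in `I`. If every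
`R_d` with `d ≥ k s` lay in `R_+^{k+1} = R_+^k R_+`, induction on `d` would put all of these `R_d`
into `I`, a contradiction; such a `d` witnesses `β_k(R) ≥ k σ(R)`.
-/

open DirectSum GradedAlgebra Submodule

section Projection

variable {ι F R : Type*} [DecidableEq ι] [AddMonoid ι] [CommSemiring F] [Semiring R]
  [Algebra F R] (𝒜 : ι → Submodule F R) [GradedAlgebra 𝒜]

namespace GradedAlgebra

theorem proj_mem (i : ι) (x : R) : proj 𝒜 i x ∈ 𝒜 i :=
  (decompose 𝒜 x i).2

theorem proj_of_mem_same {i : ι} {x : R} (hx : x ∈ 𝒜 i) : proj 𝒜 i x = x :=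
  decompose_of_mem_same 𝒜 hx

theorem proj_of_mem_ne {i j : ι} {x : R} (hx : x ∈ 𝒜 i) (hij : i ≠ j) : proj 𝒜 j x = 0 :=
  decompose_of_mem_ne 𝒜 hx hij

theorem map_proj_le (M : Submodule F R) (i : ι) : M.map (proj 𝒜 i) ≤ 𝒜 i := by
  rintro _ ⟨x, -, rfl⟩
  exact proj_mem 𝒜 i x

theorem map_proj_mul_le (M N : Submodule F R) (d : ι) :
    (M * N).map (proj 𝒜 d) ≤
      ⨆ (p : ι × ι) (_ : p.1 + p.2 = d), M.map (proj 𝒜 p.1) * N.map (proj 𝒜 p.2) := by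
  classical
  rw [map_le_iff_le_comap]
  refine mul_le.2 fun m hm n hn => ?_
  rw [mem_comap, proj_apply, decompose_mul, coe_mul_apply]
  refine sum_mem fun p hp => mem_iSup_of_mem p (mem_iSup_of_mem (Finset.mem_filter.1 hp).2 ?_)
  exact mul_mem_mul (mem_map_of_mem hm) (mem_map_of_mem hn)

theorem grade_inf_mul_le (M N : Submodule F R) (d : ι) :
    𝒜 d ⊓ (M * N) ≤
      ⨆ (p : ι × ι) (_ : p.1 + p.2 = d), M.map (proj 𝒜 p.1) * N.map (proj 𝒜 p.2) :=
  fun x ⟨hxd, hx⟩ => map_proj_mul_le 𝒜 M N d ⟨x, hx, proj_of_mem_same 𝒜 hxd⟩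

theorem map_proj_biSup_eq_bot {s : Set ι} {j : ι} (hj : j ∉ s) :
    (⨆ i ∈ s, 𝒜 i).map (proj 𝒜 j) = ⊥ := by
  rw [eq_bot_iff, map_le_iff_le_comap]
  refine iSup₂_le fun i hi x hx => ?_
  rw [mem_comap, proj_of_mem_ne 𝒜 hx (ne_of_mem_of_not_mem hi hj)]
  exact zero_mem _

theorem exists_finset_homogeneous_adjoin_eq_top [Algebra.FiniteType F R] :
    ∃ S : Finset R, Algebra.adjoin F (S : Set R) = ⊤ ∧
      ∀ x ∈ S, SetLike.IsHomogeneousElem 𝒜 x := by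
  classical
  obtain ⟨G, hG⟩ := Algebra.FiniteType.out (R := F) (A := R)
  refine ⟨G.biUnion fun g => (decompose 𝒜 g).support.image fun i => proj 𝒜 i g, ?_, ?_⟩
  · rw [← top_le_iff, ← hG, Algebra.adjoin_le_iff]
    intro g hg
    rw [← sum_support_decompose 𝒜 g]
    exact sum_mem fun i hi => Algebra.subset_adjoin
      (Finset.mem_biUnion.2 ⟨g, hg, Finset.mem_image_of_mem _ hi⟩)
  · simp only [Finset.mem_biUnion, Finset.mem_image]
    rintro _ ⟨g, -, i, -, rfl⟩
    exact ⟨i, proj_mem 𝒜 i g⟩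

end GradedAlgebra

theorem isHomogeneous_biSup (s : Set ι) : (⨆ i ∈ s, 𝒜 i).IsHomogeneous 𝒜 := by
  intro j x hx
  by_cases hj : j ∈ s
  · exact mem_iSup_of_mem j (mem_iSup_of_mem hj (decompose 𝒜 x j).2)
  · have hx0 := mem_map_of_mem (f := proj 𝒜 j) hx
    rw [map_proj_biSup_eq_bot 𝒜 hj, mem_bot] at hx0
    rw [← proj_apply, hx0]
    exact zero_mem _

namespace Submodule.IsHomogeneous

variable {𝒜}

theorem map_proj_le {M : Submodule F R} (hM : M.IsHomogeneous 𝒜) (i : ι) :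
    M.map (proj 𝒜 i) ≤ M := by
  rintro _ ⟨x, hx, rfl⟩
  exact hM i hx

theorem mul {M N : Submodule F R} (hM : M.IsHomogeneous 𝒜) (hN : N.IsHomogeneous 𝒜) :
    (M * N).IsHomogeneous 𝒜 := by
  intro i x hx
  have hle : (M * N).map (proj 𝒜 i) ≤ M * N := (map_proj_mul_le 𝒜 M N i).trans <|
    iSup₂_le fun p _ => mul_le_mul' (hM.map_proj_le p.1) (hN.map_proj_le p.2)
  exact hle (mem_map_of_mem hx)

variable (𝒜) in
theorem one : (1 : Submodule F R).IsHomogeneous 𝒜 := by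
  intro i x hx
  obtain ⟨c, rfl⟩ := mem_one.1 hx
  have hc : algebraMap F R c ∈ 𝒜 0 := SetLike.algebraMap_mem_graded 𝒜 c
  rcases eq_or_ne 0 i with rfl | hi
  · rw [decompose_of_mem_same 𝒜 hc]
    exact algebraMap_mem c
  · rw [decompose_of_mem_ne 𝒜 hc hi]
    exact zero_mem _

theorem pow {M : Submodule F R} (hM : M.IsHomogeneous 𝒜) : ∀ n : ℕ, (M ^ n).IsHomogeneous 𝒜
  | 0 => by rw [pow_zero]; exact one 𝒜
  | n + 1 => by rw [pow_succ]; exact (hM.pow n).mul hM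

end Submodule.IsHomogeneous

end Projection

section Positive

variable {F R : Type*} [Field F] [CommRing R] [Algebra F R] (𝒜 : ℕ → Submodule F R)

/-- The ideal `F[R_{<s}]_+ R`. -/
noncomputable def lowDegreeIdeal (s : ℕ) : Submodule F R :=
  (⨆ i ∈ Set.Ioo 0 s, 𝒜 i) * ⊤

variable {𝒜}

theorem grade_le_lowDegreeIdeal {s i : ℕ} (hi : i ∈ Set.Ioo 0 s) : 𝒜 i ≤ lowDegreeIdeal 𝒜 s :=
  fun x hx => by
    have hx' := le_iSup₂ (f := fun i (_ : i ∈ Set.Ioo 0 s) => 𝒜 i) i hi hx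
    simpa [lowDegreeIdeal] using mul_mem_mul hx' (mem_top (x := 1))

theorem mul_le_lowDegreeIdeal_of_left {s : ℕ} {M N : Submodule F R}
    (hM : M ≤ lowDegreeIdeal 𝒜 s) : M * N ≤ lowDegreeIdeal 𝒜 s := by
  refine (mul_le_mul' hM le_rfl).trans ?_
  rw [lowDegreeIdeal, mul_assoc]
  exact mul_le_mul' le_rfl le_top

theorem mul_le_lowDegreeIdeal_of_right {s : ℕ} {M N : Submodule F R}
    (hN : N ≤ lowDegreeIdeal 𝒜 s) : M * N ≤ lowDegreeIdeal 𝒜 s :=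
  mul_comm N M ▸ mul_le_lowDegreeIdeal_of_left hN

variable (𝒜) [GradedAlgebra 𝒜]

theorem grade_inf_gradePos_pow_succ_le (j m : ℕ) :
    𝒜 m ⊓ gradePos 𝒜 ^ (j + 1) ≤
      ⨆ (p : ℕ × ℕ) (_ : p.1 + p.2 = m) (_ : 0 < p.2), (𝒜 p.1 ⊓ gradePos 𝒜 ^ j) * 𝒜 p.2 := by
  rw [pow_succ]
  refine (grade_inf_mul_le 𝒜 _ _ m).trans (iSup₂_le fun p hp => ?_)
  rcases Nat.eq_zero_or_pos p.2 with h | h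
  · rw [h, gradePos, map_proj_biSup_eq_bot 𝒜 (s := Set.Ioi 0) (lt_irrefl 0), mul_bot]
    exact bot_le
  · have hpow := ((isHomogeneous_biSup 𝒜 (Set.Ioi 0)).pow j).map_proj_le p.1
    exact le_iSup₂_of_le p hp <| le_iSup_of_le h <|
      mul_le_mul' (le_inf (map_proj_le 𝒜 _ _) hpow) (map_proj_le 𝒜 _ _)

theorem grade_inf_lowDegreeIdeal_le (s m : ℕ) :
    𝒜 m ⊓ lowDegreeIdeal 𝒜 s ≤
      ⨆ (p : ℕ × ℕ) (_ : p.1 + p.2 = m) (_ : p.1 ∈ Set.Ioo 0 s), 𝒜 p.1 * 𝒜 p.2 := by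
  refine (grade_inf_mul_le 𝒜 _ _ m).trans (iSup₂_le fun p hp => ?_)
  by_cases h : p.1 ∈ Set.Ioo 0 s
  · exact le_iSup₂_of_le p hp <| le_iSup_of_le h <|
      mul_le_mul' (map_proj_le 𝒜 _ _) (map_proj_le 𝒜 _ _)
  · rw [map_proj_biSup_eq_bot 𝒜 h, bot_mul]
    exact bot_le

/-- A product of `j` positive-degree homogeneous factors of total degree `< j s` has a factor of
degree `< s`. -/
theorem grade_inf_gradePos_pow_le_lowDegreeIdeal (s : ℕ) :
    ∀ j m, m < j * s → 𝒜 m ⊓ gradePos 𝒜 ^ j ≤ lowDegreeIdeal 𝒜 s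
  | 0, m, hm => by simp at hm
  | j + 1, m, hm => by
    refine (grade_inf_gradePos_pow_succ_le 𝒜 j m).trans <|
      iSup_le fun p => iSup_le fun hp => iSup_le fun hp2 => ?_
    rcases lt_or_ge p.1 (j * s) with h1 | h1
    · exact mul_le_lowDegreeIdeal_of_left
        (grade_inf_gradePos_pow_le_lowDegreeIdeal s j p.1 h1)
    · rw [Nat.succ_mul] at hm
      exact mul_le_lowDegreeIdeal_of_right (grade_le_lowDegreeIdeal ⟨hp2, by omega⟩)

theorem grade_le_lowDegreeIdeal_of_grade_le_gradePos_pow {s k : ℕ}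
    (h : ∀ d, k * s ≤ d → 𝒜 d ≤ gradePos 𝒜 ^ (k + 1)) (m : ℕ) (hm : k * s ≤ m) :
    𝒜 m ≤ lowDegreeIdeal 𝒜 s := by
  induction m using Nat.strong_induction_on with
  | _ m ih =>
  refine (le_inf le_rfl (h m hm)).trans <| (grade_inf_gradePos_pow_succ_le 𝒜 k m).trans <|
    iSup_le fun p => iSup_le fun hp => iSup_le fun hp2 => mul_le_lowDegreeIdeal_of_left ?_
  rcases lt_or_ge p.1 (k * s) with h1 | h1
  · exact grade_inf_gradePos_pow_le_lowDegreeIdeal 𝒜 s k p.1 h1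
  · exact inf_le_left.trans (ih p.1 (by omega) h1)

/-- Monomials of degree `m` in homogeneous generators have at most `m` factors of positive
degree, the degree-zero ones being scalars. -/
theorem grade_le_pow_of_adjoin_eq_top (h0 : 𝒜 0 = 1) {S : Set R}
    (hS : ∀ x ∈ S, SetLike.IsHomogeneousElem 𝒜 x) (hadj : Algebra.adjoin F S = ⊤)
    {W : Submodule F R} (hW1 : 1 ≤ W) (hSW : S ⊆ W) (m : ℕ) : 𝒜 m ≤ W ^ m := by
  have of_mem : ∀ {x i}, x ∈ 𝒜 i → x ∈ W ^ i → ∀ m, proj 𝒜 m x ∈ W ^ m := by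
    intro x i hx hxW m
    rcases eq_or_ne i m with rfl | h
    · rwa [proj_of_mem_same 𝒜 hx]
    · rw [proj_of_mem_ne 𝒜 hx h]
      exact zero_mem _
  suffices ∀ x m, proj 𝒜 m x ∈ W ^ m from fun x hx => proj_of_mem_same 𝒜 hx ▸ this x m
  intro x
  induction (hadj ▸ Algebra.mem_top : x ∈ Algebra.adjoin F S) using Algebra.adjoin_induction with
  | mem s hs =>
    obtain ⟨i, hi⟩ := hS s hs
    refine of_mem hi ?_
    rcases Nat.eq_zero_or_pos i with rfl | hi0
    · rwa [pow_zero, ← h0]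
    · have hWi : W ≤ W ^ i := by simpa using pow_le_pow_right' hW1 hi0
      exact hWi (hSW hs)
  | algebraMap c =>
    exact of_mem (SetLike.algebraMap_mem_graded 𝒜 c) (by rw [pow_zero]; exact algebraMap_mem c)
  | add x y _ _ hx hy =>
    intro m
    rw [map_add]
    exact add_mem (hx m) (hy m)
  | mul x y _ _ hx hy =>
    classical
    intro m
    rw [proj_apply, decompose_mul, coe_mul_apply]
    refine sum_mem fun p hp => ?_
    rw [← (Finset.mem_filter.1 hp).2, pow_add]
    exact mul_mem_mul (hx p.1) (hy p.2)

theorem finite_gBelow_of_grade_le_lowDegreeIdeal (h0 : 𝒜 0 = 1) [Algebra.FiniteType F R]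
    {s n : ℕ} (h : ∀ m, n ≤ m → 𝒜 m ≤ lowDegreeIdeal 𝒜 s) :
    Module.Finite (gBelow 𝒜 (s - 1)) R := by
  classical
  obtain ⟨S, hadj, hS⟩ := exists_finset_homogeneous_adjoin_eq_top 𝒜
  set W := span F (insert 1 (S : Set R))
  have hW1 : 1 ≤ W := one_le.2 (subset_span (Set.mem_insert _ _))
  have hW := grade_le_pow_of_adjoin_eq_top 𝒜 h0 hS hadj hW1
    ((Set.subset_insert _ _).trans subset_span)
  set N := span (gBelow 𝒜 (s - 1)) ((W ^ n : Submodule F R) : Set R)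
  have hgrade : ∀ m, 𝒜 m ≤ N.restrictScalars F := by
    intro m
    induction m using Nat.strong_induction_on with
    | _ m ih =>
    rcases lt_or_ge m n with hm | hm
    · exact (hW m).trans ((pow_le_pow_right' hW1 hm.le).trans subset_span)
    refine (le_inf le_rfl (h m hm)).trans <| (grade_inf_lowDegreeIdeal_le 𝒜 s m).trans <|
      iSup_le fun p => iSup_le fun hp => iSup_le fun hp1 => mul_le.2 fun y hy z hz => ?_
    have hyT : y ∈ gBelow 𝒜 (s - 1) :=
      Algebra.subset_adjoin (Set.mem_biUnion (Nat.le_sub_one_of_lt hp1.2) hy)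
    exact N.smul_mem ⟨y, hyT⟩ (ih p.2 (by grind) hz)
  have hN : N = ⊤ := by
    refine eq_top_iff.2 fun x _ => ?_
    rw [← sum_support_decompose 𝒜 x]
    exact sum_mem fun i _ => hgrade i (decompose 𝒜 x i).2
  obtain ⟨G, hG⟩ := (fg_span (Set.toFinite _) : W.FG).pow n
  refine ⟨hN ▸ ⟨G, ?_⟩⟩
  rw [← span_span_of_tower F, hG]

end Positive

theorem gBeta_ge_mul_gSigma_general {F R : Type*} [Field F] [CommRing R] [Algebra F R]
    (𝒜 : ℕ → Submodule F R) [GradedAlgebra 𝒜] (h0 : 𝒜 0 = 1)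
    (hfg : Algebra.FiniteType F R) (k : ℕ) :
    ((k * gSigma 𝒜 : ℕ) : ℕ∞) ≤ gBeta 𝒜 k := by
  rcases Nat.eq_zero_or_pos (k * gSigma 𝒜) with h | hpos
  · rw [h, Nat.cast_zero]
    exact zero_le
  obtain ⟨d, hd, hdβ⟩ : ∃ d, k * gSigma 𝒜 ≤ d ∧ ¬ 𝒜 d ≤ gradePos 𝒜 ^ (k + 1) := by
    by_contra! h
    have hσ : gSigma 𝒜 ≤ gSigma 𝒜 - 1 := Nat.sInf_le <|
      finite_gBelow_of_grade_le_lowDegreeIdeal 𝒜 h0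
        (grade_le_lowDegreeIdeal_of_grade_le_gradePos_pow 𝒜 h)
    have := Nat.pos_of_mul_pos_left hpos
    omega
  calc ((k * gSigma 𝒜 : ℕ) : ℕ∞) ≤ d := by exact_mod_cast hd
    _ ≤ gBeta 𝒜 k := le_sSup ⟨d, ⟨hpos.trans_le hd, hdβ⟩, rfl⟩

/-- For a finitely generated commutative graded `F`-algebra `R` with `R_0 = F` and any
positive integer `k`, `β_k(R) ≥ k·σ(R)`. -/
theorem gBeta_ge_mul_gSigma {F R : Type*} [Field F] [CommRing R] [Algebra F R]
    (𝒜 : ℕ → Submodule F R) [GradedAlgebra 𝒜] (h0 : 𝒜 0 = 1)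
    (hfg : Algebra.FiniteType F R) (k : ℕ) (hk : 1 ≤ k) :
    ((k * gSigma 𝒜 : ℕ) : ℕ∞) ≤ gBeta 𝒜 k :=
  gBeta_ge_mul_gSigma_general 𝒜 h0 hfg k
end

section
/- Let p be a prime. For any non-empty subset S ⊆ (ℤ/pℤ) \ {0} there exists a multiset T of elements of ℤ/pℤ of cardinality at most p whose elements sum to 0 and whose underlying set of elements (support) is exactly S. -/
open scoped Pointwise
open Finset

/-!
Let `k = |S|` and `A = S ∪ {0}`. Iterating Cauchy–Davenport, the `(p - k)`-fold sumset of `A` has at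
least `min p ((p - k) * k + 1) = p` elements, so `-∑ S` is a sum of `p - k` elements of `A`.
Appending them to `S` and discarding the zeros gives a zero-sum sequence of length at most `p`
with support `S`.
-/

theorem Multiset.sum_filter_ne_zero {M : Type*} [AddCommMonoid M] [DecidableEq M] (s : Multiset M) :
    (s.filter (· ≠ 0)).sum = s.sum := by
  have hzero : (s.filter (¬· ≠ 0)).sum = 0 :=
    Multiset.sum_eq_zero fun x hx ↦ by simpa using (Multiset.mem_filter.1 hx).2
  rw [← s.sum_filter_add_sum_filter_not (· ≠ 0), hzero, add_zero]

theorem Finset.exists_multiset_sum_eq_of_mem_nsmul {M : Type*} [AddCommMonoid M] [DecidableEq M]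
    {A : Finset M} {n : ℕ} {a : M} (ha : a ∈ n • A) :
    ∃ U : Multiset M, Multiset.card U = n ∧ (∀ u ∈ U, u ∈ A) ∧ U.sum = a := by
  obtain ⟨f, rfl⟩ := Finset.mem_nsmul.1 ha
  exact ⟨List.ofFn fun i ↦ (f i : M), by simp, by simp, by simp⟩

theorem ZMod.min_le_card_nsmul {p : ℕ} (hp : p.Prime) {A : Finset (ZMod p)} (hA : A.Nonempty)
    (n : ℕ) : min p (n * (#A - 1) + 1) ≤ #(n • A) := by
  induction n with
  | zero => simp
  | succ n ih =>
    rw [succ_nsmul, add_one_mul]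
    refine le_trans ?_ (ZMod.cauchy_davenport hp hA.nsmul hA)
    have := hA.card_pos
    omega

theorem Nat.le_sub_mul_add_one {k p : ℕ} (hk : 0 < k) (hkp : k < p) : p ≤ (p - k) * k + 1 := by
  obtain ⟨m, rfl⟩ := Nat.exists_eq_add_of_lt hkp
  rw [show k + m + 1 - k = m + 1 by omega]
  nlinarith

/-- For any non-empty subset `S ⊆ (ℤ/pℤ) \ {0}` there is a zero-sum sequence (multiset) over
`ℤ/pℤ` of length at most `p` with support exactly `S`. -/
theorem exists_zero_sum_multiset_with_support {p : ℕ} (hp : p.Prime)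
    (S : Finset (ZMod p)) (hS : S.Nonempty) (h0 : (0 : ZMod p) ∉ S) :
    ∃ T : Multiset (ZMod p), Multiset.card T ≤ p ∧ T.sum = 0 ∧ T.toFinset = S := by
  have : NeZero p := ⟨hp.ne_zero⟩
  have hkp : #S + 1 ≤ p := by
    simpa [card_insert_of_notMem h0] using card_le_univ (insert 0 S)
  have hcover := Nat.le_sub_mul_add_one hS.card_pos hkp
  have huniv : (p - #S) • insert 0 S = univ := by
    refine eq_univ_of_card _ (le_antisymm (card_le_univ _) ?_)
    simpa [card_insert_of_notMem h0, hcover] using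
      ZMod.min_le_card_nsmul hp (insert_nonempty 0 S) (p - #S)
  obtain ⟨U, hUcard, hUS, hUsum⟩ :=
    exists_multiset_sum_eq_of_mem_nsmul (huniv ▸ mem_univ (-S.val.sum))
  refine ⟨(S.val + U).filter (· ≠ 0), ?_, ?_, ?_⟩
  · grw [Multiset.card_le_card (Multiset.filter_le _ _)]
    simp only [Multiset.card_add, card_val, hUcard]
    omega
  · rw [Multiset.sum_filter_ne_zero, Multiset.sum_add, hUsum, add_neg_cancel]
  · ext x
    have hxU := hUS x
    simp only [Multiset.mem_toFinset, Multiset.mem_filter, Multiset.mem_add, mem_val,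
      mem_insert] at hxU ⊢
    grind
end
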